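/- The following identity of convergent series of real numbers holds: 2·Σ_{i=2}^∞ 1/(4i²−1) + Σ_{i=1}^∞ 1/((2i−1)²(2i+3)²) + Σ_{i=0}^∞ ((i+2)² + (i+1)²)/((2i+1)(2i+5)(2i+3)²) = 5/9. Equivalently, the quantity ((T−t)^4/16)·(5/9 − 2Σ_{i=2}^q 1/(4i²−1) − Σ_{i=1}^q 1/((2i−1)²(2i+3)²) − Σ_{i=0}^q ((i+2)²+(i+1)²)/((2i+1)(2i+5)(2i+3)²)) tends to 0 as q → ∞ for any reals t < T. -/

import Mathlib

/-!
Both identities come from telescoping. Partial fractions give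
`1 / (4 (i + 2)² - 1) = (1/2) (1 / (2i + 3) - 1 / (2i + 5))`, so the first series sums to `1/6`.
The second and third series do not telescope separately, but their termwise sum is
`g i - g (i + 1)` with
`g i = (1/16) (1 / (2i + 1)² - 1 / (2i + 3)²) + (1/8) (1 / (2i + 1) + 1 / (2i + 3))` (`tailBC`),
so together they sum to `g 0 = 2/9`, and `2 · 1/6 + 2/9 = 5/9`.
-/

open Filter Finset Topology

theorem hasSum_of_eq_sub_succ {f g : ℕ → ℝ} {l : ℝ} (hf : ∀ i, 0 ≤ f i)
    (hfg : ∀ i, f i = g i - g (i + 1)) (hg : Tendsto g atTop (𝓝 l)) :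
    HasSum f (g 0 - l) := by
  have hpartial : ∀ n, ∑ i ∈ range n, f i = g 0 - g n := fun n => by
    rw [sum_congr rfl fun i _ => hfg i, sum_range_sub']
  rw [hasSum_iff_tendsto_nat_of_nonneg hf, funext hpartial]
  exact tendsto_const_nhds.sub hg

theorem HasSum.tendsto_sum_Icc {M : Type*} [AddCommMonoid M] [TopologicalSpace M]
    {f : ℕ → M} {a : M} {k : ℕ} (h : HasSum (fun j => f (j + k)) a) :
    Tendsto (fun q => ∑ i ∈ Icc k q, f i) atTop (𝓝 a) := by
  have hreindex : ∀ q, ∑ i ∈ Icc k q, f i = ∑ j ∈ range (q + 1 - k), f (j + k) := fun q => by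
    simp only [← Ico_add_one_right_eq_Icc, sum_Ico_eq_sum_range, add_comm k]
  rw [funext hreindex]
  exact h.tendsto_sum_nat.comp ((tendsto_sub_atTop_nat k).comp (tendsto_add_atTop_nat 1))

theorem tendsto_one_div_two_mul_add (c : ℝ) :
    Tendsto (fun i : ℕ => 1 / (2 * (i : ℝ) + c)) atTop (𝓝 0) := by
  simp only [one_div]
  exact tendsto_inv_atTop_zero.comp <| tendsto_atTop_add_const_right _ c <|
    (tendsto_natCast_atTop_atTop (R := ℝ)).const_mul_atTop two_pos

noncomputable def termA (i : ℕ) : ℝ := 1 / (4 * ((i : ℝ) + 2) ^ 2 - 1)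

noncomputable def termB (i : ℕ) : ℝ := 1 / ((2 * (i : ℝ) + 1) ^ 2 * (2 * (i : ℝ) + 5) ^ 2)

noncomputable def termC (i : ℕ) : ℝ :=
  (((i : ℝ) + 2) ^ 2 + ((i : ℝ) + 1) ^ 2)
    / ((2 * (i : ℝ) + 1) * (2 * (i : ℝ) + 5) * (2 * (i : ℝ) + 3) ^ 2)

theorem termA_eq (i : ℕ) : termA i = 1 / ((2 * (i : ℝ) + 3) * (2 * i + 5)) := by
  rw [termA]
  ring

theorem termA_nonneg (i : ℕ) : 0 ≤ termA i := by
  rw [termA_eq]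
  positivity

theorem termA_eq_sub_succ (i : ℕ) :
    termA i = 1 / (2 * (2 * (i : ℝ) + 3)) - 1 / (2 * (2 * ((i + 1 : ℕ) : ℝ) + 3)) := by
  rw [termA_eq]
  push_cast
  field_simp
  ring

theorem hasSum_termA : HasSum termA (1 / 6) := by
  have hg : Tendsto (fun i : ℕ => 1 / (2 * (2 * (i : ℝ) + 3))) atTop (𝓝 0) := by
    simpa only [one_div, mul_inv, mul_zero] using (tendsto_one_div_two_mul_add 3).const_mul 2⁻¹
  convert hasSum_of_eq_sub_succ termA_nonneg termA_eq_sub_succ hg using 1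
  norm_num

noncomputable def tailBC (i : ℕ) : ℝ :=
  (1 / 16) * (1 / (2 * (i : ℝ) + 1) ^ 2 - 1 / (2 * (i : ℝ) + 3) ^ 2)
    + (1 / 8) * (1 / (2 * (i : ℝ) + 1) + 1 / (2 * (i : ℝ) + 3))

theorem termB_nonneg (i : ℕ) : 0 ≤ termB i := by
  rw [termB]
  positivity

theorem termC_nonneg (i : ℕ) : 0 ≤ termC i := by
  rw [termC]
  positivity

theorem termB_add_termC_eq_sub_succ (i : ℕ) :
    termB i + termC i = tailBC i - tailBC (i + 1) := by
  have h1 : (2 * (i : ℝ) + 1) ≠ 0 := by positivity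
  have h3 : (2 * (i : ℝ) + 3) ≠ 0 := by positivity
  have h5 : (2 * (i : ℝ) + 5) ≠ 0 := by positivity
  rw [termB, termC, tailBC, tailBC]
  push_cast
  field_simp
  ring

theorem tendsto_tailBC : Tendsto tailBC atTop (𝓝 0) := by
  have h1 := tendsto_one_div_two_mul_add 1
  have h3 := tendsto_one_div_two_mul_add 3
  have hlim := ((h1.pow 2).sub (h3.pow 2)).const_mul (1 / 16) |>.add ((h1.add h3).const_mul (1 / 8))
  simp only [div_pow, one_pow, sub_self, add_zero, zero_pow two_ne_zero, mul_zero] at hlim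
  exact hlim

theorem hasSum_termB_add_termC : HasSum (fun i => termB i + termC i) (2 / 9) := by
  convert hasSum_of_eq_sub_succ (fun i => add_nonneg (termB_nonneg i) (termC_nonneg i))
    termB_add_termC_eq_sub_succ tendsto_tailBC using 1
  norm_num [tailBC]

theorem summable_termB : Summable termB :=
  hasSum_termB_add_termC.summable.of_nonneg_of_le termB_nonneg
    fun i => le_add_of_nonneg_right (termC_nonneg i)

theorem summable_termC : Summable termC :=
  hasSum_termB_add_termC.summable.of_nonneg_of_le termC_nonneg
    fun i => le_add_of_nonneg_left (termB_nonneg i)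

theorem tendsto_sum_Icc_two_termA :
    Tendsto (fun q : ℕ => ∑ i ∈ Icc 2 q, (1 : ℝ) / (4 * (i : ℝ) ^ 2 - 1)) atTop (𝓝 (1 / 6)) :=
  HasSum.tendsto_sum_Icc <| by push_cast; exact hasSum_termA

theorem tendsto_sum_Icc_one_termB :
    Tendsto (fun q : ℕ => ∑ i ∈ Icc 1 q, (1 : ℝ) / ((2 * (i : ℝ) - 1) ^ 2 * (2 * (i : ℝ) + 3) ^ 2))
      atTop (𝓝 (∑' i, termB i)) := by
  refine HasSum.tendsto_sum_Icc ?_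
  convert summable_termB.hasSum using 2 with i
  rw [termB]
  push_cast
  ring

/-- the series identity
`2·Σ_{i=2}^∞ 1/(4i²−1) + Σ_{i=1}^∞ 1/((2i−1)²(2i+3)²)
  + Σ_{i=0}^∞ ((i+2)²+(i+1)²)/((2i+1)(2i+5)(2i+3)²) = 5/9`,
and consequently the error quantity
`((T−t)⁴/16)(5/9 − 2Σ_{i=2}^q … − Σ_{i=1}^q … − Σ_{i=0}^q …)` tends to `0` as `q → ∞`. -/
theorem series_identity_five_ninths :
    (Summable fun i : ℕ => (1 : ℝ) / (4 * ((i : ℝ) + 2) ^ 2 - 1)) ∧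
    (Summable fun i : ℕ => (1 : ℝ) / ((2 * (i : ℝ) + 1) ^ 2 * (2 * (i : ℝ) + 5) ^ 2)) ∧
    (Summable fun i : ℕ =>
      (((i : ℝ) + 2) ^ 2 + ((i : ℝ) + 1) ^ 2)
        / ((2 * (i : ℝ) + 1) * (2 * (i : ℝ) + 5) * (2 * (i : ℝ) + 3) ^ 2)) ∧
    2 * (∑' i : ℕ, (1 : ℝ) / (4 * ((i : ℝ) + 2) ^ 2 - 1))
      + (∑' i : ℕ, (1 : ℝ) / ((2 * (i : ℝ) + 1) ^ 2 * (2 * (i : ℝ) + 5) ^ 2))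
      + (∑' i : ℕ, (((i : ℝ) + 2) ^ 2 + ((i : ℝ) + 1) ^ 2)
          / ((2 * (i : ℝ) + 1) * (2 * (i : ℝ) + 5) * (2 * (i : ℝ) + 3) ^ 2))
      = 5 / 9 ∧
    ∀ t T : ℝ, t < T →
      Filter.Tendsto
        (fun q : ℕ =>
          (T - t) ^ 4 / 16 *
            (5 / 9 - 2 * ∑ i ∈ Finset.Icc 2 q, (1 : ℝ) / (4 * (i : ℝ) ^ 2 - 1)
              - ∑ i ∈ Finset.Icc 1 q, (1 : ℝ) / ((2 * (i : ℝ) - 1) ^ 2 * (2 * (i : ℝ) + 3) ^ 2)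
              - ∑ i ∈ Finset.range (q + 1),
                  (((i : ℝ) + 2) ^ 2 + ((i : ℝ) + 1) ^ 2)
                    / ((2 * (i : ℝ) + 1) * (2 * (i : ℝ) + 5) * (2 * (i : ℝ) + 3) ^ 2)))
        Filter.atTop (nhds 0) := by
  have hBC : ∑' i, termB i + ∑' i, termC i = 2 / 9 := by
    rw [← summable_termB.tsum_add summable_termC, hasSum_termB_add_termC.tsum_eq]
  have hsum : 2 * ∑' i, termA i + ∑' i, termB i + ∑' i, termC i = 5 / 9 := by
    rw [hasSum_termA.tsum_eq]
    linarith
  refine ⟨hasSum_termA.summable, summable_termB, summable_termC, hsum, fun t T _ => ?_⟩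
  have hlim := ((((tendsto_const_nhds (x := (5 : ℝ) / 9)).sub
    (tendsto_sum_Icc_two_termA.const_mul 2)).sub tendsto_sum_Icc_one_termB).sub
    (summable_termC.hasSum.tendsto_sum_nat.comp (tendsto_add_atTop_nat 1))).const_mul
    ((T - t) ^ 4 / 16)
  rwa [show 5 / 9 - 2 * (1 / 6) - ∑' i, termB i - ∑' i, termC i = 0 by linarith, mul_zero]
    at hlim
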